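/- The function φ(x) defined by φ(x) = x − x³/6 for |x| ≤ √2 and φ(x) = sign(x)·(2√2)/3 for |x| > √2 satisfies −log(1 − x + x²/2) ≤ φ(x) ≤ log(1 + x + x²/2) for all real x, is symmetric (φ(−x) = −φ(x)), and satisfies |φ(x)| ≤ 2√2/3. -/
import Mathlib


open Real

lemma sum5 (t : ℝ) : ∑ m ∈ Finset.range 5, t ^ m / m.factorial
    = 1 + t + t^2/2 + t^3/6 + t^4/24 := by
  norm_num [Finset.sum_range_succ, Nat.factorial]

lemma exp_le_P4_of_nonpos {t : ℝ} (ht : t ≤ 0) :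
    Real.exp t ≤ 1 + t + t^2/2 + t^3/6 + t^4/24 := by
  have h2 : 1 + (-t) + (-t)^2/2 + (-t)^3/6 + (-t)^4/24 ≤ Real.exp (-t) := by
    rw [← sum5]; exact Real.sum_le_exp_of_nonneg (by linarith) 5
  have hP : (1:ℝ) ≤ 1 + (-t) + (-t)^2/2 + (-t)^3/6 + (-t)^4/24 := by nlinarith [sq_nonneg t, pow_nonneg (neg_nonneg.2 ht) 3, pow_nonneg (neg_nonneg.2 ht) 4]
  have hprod : (1:ℝ) ≤ (1 + (-t) + (-t)^2/2 + (-t)^3/6 + (-t)^4/24) * (1 + t + t^2/2 + t^3/6 + t^4/24) := by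
    nlinarith [pow_nonneg (sq_nonneg t) 3, sq_nonneg (t^3), sq_nonneg (t^4)]
  have he : Real.exp t * Real.exp (-t) = 1 := by
    rw [← Real.exp_add]; simp
  nlinarith [Real.exp_pos t, Real.exp_pos (-t), mul_le_mul_of_nonneg_left h2 (Real.exp_pos t).le]

lemma exp_le_P5 {t : ℝ} (ht : |t| ≤ 1) :
    Real.exp t ≤ 1 + t + t^2/2 + t^3/6 + t^4/24 + |t|^5/100 := by
  have := Real.exp_bound ht (n := 5) (by norm_num)
  rw [sum5] at this
  have h := abs_le.1 this
  have : ((5:ℕ).succ : ℝ) / ((5:ℕ).factorial * (5:ℕ)) = 1/100 := by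
    norm_num [Nat.factorial]
  rw [this] at h
  linarith [h.2]

-- positive side polynomial: for 0 ≤ x, x^2 ≤ 2,
-- 1 + t + t²/2 + t³/6 + t⁴/24 + t⁵/100 ≤ 1 + x + x²/2 with t = x - x³/6, expanded:
lemma polyPos {x : ℝ} (hx : 0 ≤ x) (h2 : x^2 ≤ 2) :
    0 ≤ 97200*x^4 + 57024*x^5 + 10800*x^6 - 4320*x^7 - 5400*x^8 - 1560*x^9
      + 600*x^10 + 360*x^11 - 25*x^12 - 30*x^13 + x^15 := by
  have h := sub_nonneg.2 h2
  have p : ∀ k : ℕ, 0 ≤ (2 - x^2) * x^k := fun k => mul_nonneg h (pow_nonneg hx k)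
  nlinarith [p 4, p 5, p 6, p 7, p 8, p 9, p 10, p 11, p 12, p 13,
    pow_nonneg hx 4, pow_nonneg hx 5, pow_nonneg hx 6, pow_nonneg hx 10,
    pow_nonneg hx 11, pow_nonneg hx 15]

-- negative side: y = -x ∈ [0, √2]:
lemma polyNeg {y s : ℝ} (hy : 0 ≤ y) (h2 : y^2 ≤ 2) (hys : y ≤ s) (hs : s^2 = 2)
    (hs15 : s ≤ 3/2) :
    0 ≤ 3888*y^4 - 2592*y^5 + 432*y^6 + 432*y^7 - 216*y^8 - 24*y^9 + 24*y^10 - y^12 := by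
  rcases le_or_gt y 1 with h1 | h1
  · have p : ∀ k : ℕ, 0 ≤ (1 - y) * y^k := fun k => mul_nonneg (by linarith) (pow_nonneg hy k)
    nlinarith [p 4, p 5, p 6, p 7, p 8, p 9, p 10, p 11,
      pow_nonneg hy 6, pow_nonneg hy 7, pow_nonneg hy 10]
  · have q : ∀ k : ℕ, 0 ≤ (y - 1) * y^k := fun k => mul_nonneg (by linarith) (pow_nonneg hy k)
    have r : ∀ k : ℕ, 0 ≤ (2 - y^2) * y^k := fun k => mul_nonneg (by linarith) (pow_nonneg hy k)
    have w : 0 ≤ (s - y) * y^4 := mul_nonneg (by linarith) (pow_nonneg hy 4)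
    nlinarith [q 4, q 5, q 6, q 7, q 8, q 9, q 10, q 11, r 4, r 5, r 6, r 7, r 8, r 9, r 10, w,
      pow_nonneg hy 4, pow_nonneg hy 5]

lemma upper_small {x : ℝ} (h : |x| ≤ Real.sqrt 2) :
    Real.exp (x - x^3/6) ≤ 1 + x + x^2/2 := by
  have hs : (Real.sqrt 2)^2 = 2 := Real.sq_sqrt (by norm_num)
  have hs0 : 0 ≤ Real.sqrt 2 := Real.sqrt_nonneg 2
  have hs15 : Real.sqrt 2 ≤ 3/2 := by nlinarith
  obtain ⟨hl, hr⟩ := abs_le.1 h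
  have hx2 : x^2 ≤ 2 := by nlinarith
  rcases le_or_gt x 0 with hx | hx
  · -- t ≤ 0
    have ht : x - x^3/6 ≤ 0 := by nlinarith
    have hb := exp_le_P4_of_nonpos ht
    have key := polyNeg (y := -x) (s := Real.sqrt 2) (by linarith) (by nlinarith) (by linarith) hs hs15
    nlinarith [hb, key]
  · -- t ≥ 0
    have ht0 : 0 ≤ x - x^3/6 := by nlinarith
    have ht1 : x - x^3/6 ≤ 1 := by
      nlinarith [mul_nonneg (by linarith : (0:ℝ) ≤ Real.sqrt 2 - x)
        (by nlinarith : (0:ℝ) ≤ 4 - x * Real.sqrt 2 - x^2)]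
    have hb := exp_le_P5 (t := x - x^3/6) (by rw [abs_le]; constructor <;> linarith)
    rw [abs_of_nonneg ht0] at hb
    have key := polyPos hx.le hx2
    nlinarith [hb, key]


/-- The explicit Catoni–Giulini influence function: `φ(x) = x − x³/6` for `|x| ≤ √2` and
`φ(x) = sign(x)·2√2/3` otherwise. -/
noncomputable def catoniPhi (x : ℝ) : ℝ :=
  if |x| ≤ Real.sqrt 2 then x - x ^ 3 / 6 else Real.sign x * (2 * Real.sqrt 2 / 3)

lemma phi_odd (x : ℝ) : catoniPhi (-x) = -catoniPhi x := by
  unfold catoniPhi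
  rw [abs_neg]
  split_ifs with h
  · ring
  · rw [Real.sign_neg]; ring

lemma phi_upper (x : ℝ) : catoniPhi x ≤ Real.log (1 + x + x^2/2) := by
  have hpos : 0 < 1 + x + x^2/2 := by nlinarith [sq_nonneg (x+1)]
  rw [Real.le_log_iff_exp_le hpos]
  have hs : (Real.sqrt 2)^2 = 2 := Real.sq_sqrt (by norm_num)
  have hs0 : 0 ≤ Real.sqrt 2 := Real.sqrt_nonneg 2
  have hs1 : 1 ≤ Real.sqrt 2 := by nlinarith
  unfold catoniPhi
  split_ifs with h
  · exact upper_small h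
  · push_neg at h
    rcases lt_trichotomy x 0 with hx | hx | hx
    · rw [Real.sign_of_neg hx]
      have hxs : x < -Real.sqrt 2 := by
        rcases abs_cases x with ⟨he, _⟩ | ⟨he, _⟩ <;> [linarith; linarith [h, he]]
      have h1 : Real.exp (2 * Real.sqrt 2 / 3) ≥ 1 + 2 * Real.sqrt 2 / 3 := by
        linarith [Real.add_one_le_exp (2 * Real.sqrt 2 / 3)]
      have hc : (0:ℝ) < 1 + 2 * Real.sqrt 2 / 3 := by positivity
      have h2 : Real.exp (-1 * (2 * Real.sqrt 2 / 3)) ≤ (1 + 2 * Real.sqrt 2 / 3)⁻¹ := by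
        rw [show (-1 : ℝ) * (2 * Real.sqrt 2 / 3) = -(2 * Real.sqrt 2 / 3) by ring,
          Real.exp_neg]
        exact inv_anti₀ hc h1
      have h3 : 1 ≤ (1 + 2 * Real.sqrt 2 / 3) * (1 + x + x^2/2) := by
        nlinarith [mul_nonneg (show (0:ℝ) ≤ -(x + Real.sqrt 2) by linarith)
          (show (0:ℝ) ≤ Real.sqrt 2 - 2 - x by nlinarith)]
      have h4 : (1 + 2 * Real.sqrt 2 / 3)⁻¹ * (1 + 2 * Real.sqrt 2 / 3) = 1 :=
        inv_mul_cancel₀ (ne_of_gt hc)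
      nlinarith [h2, h3, h4, hc]
    · simp [hx] at h; nlinarith
    · rw [Real.sign_of_pos hx]
      have hxs : Real.sqrt 2 < x := by
        rcases abs_cases x with ⟨he, _⟩ | ⟨he, _⟩ <;> linarith
      have h1 : Real.exp (2 * Real.sqrt 2 / 3) ≤ 2 + Real.sqrt 2 := by
        have := upper_small (x := Real.sqrt 2) (by rw [abs_of_nonneg hs0])
        have he : Real.sqrt 2 - (Real.sqrt 2)^3/6 = 2 * Real.sqrt 2 / 3 := by
          rw [pow_succ, hs]; ring
        rw [he] at this
        nlinarith
      rw [one_mul]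
      nlinarith

lemma phi_abs (x : ℝ) : |catoniPhi x| ≤ 2 * Real.sqrt 2 / 3 := by
  have hs : (Real.sqrt 2)^2 = 2 := Real.sq_sqrt (by norm_num)
  have hs0 : 0 ≤ Real.sqrt 2 := Real.sqrt_nonneg 2
  have hs1 : 1 ≤ Real.sqrt 2 := by nlinarith
  unfold catoniPhi
  split_ifs with h
  · obtain ⟨hl, hr⟩ := abs_le.1 h
    rw [abs_le]
    constructor
    · nlinarith [mul_nonneg (show (0:ℝ) ≤ x + Real.sqrt 2 by linarith)
        (show (0:ℝ) ≤ 4 + x * Real.sqrt 2 - x^2 by nlinarith)]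
    · nlinarith [mul_nonneg (show (0:ℝ) ≤ Real.sqrt 2 - x by linarith)
        (show (0:ℝ) ≤ 4 - x * Real.sqrt 2 - x^2 by nlinarith)]
  · rw [abs_mul, abs_of_nonneg (by positivity : (0:ℝ) ≤ 2 * Real.sqrt 2 / 3)]
    have hx : x ≠ 0 := by
      intro h0; rw [h0] at h; simp at h
    rcases lt_or_gt_of_ne hx with h' | h'
    · rw [Real.sign_of_neg h']; norm_num
    · rw [Real.sign_of_pos h']; norm_num


theorem catoniPhi_properties :
    (∀ x : ℝ, -Real.log (1 - x + x ^ 2 / 2) ≤ catoniPhi x ∧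
      catoniPhi x ≤ Real.log (1 + x + x ^ 2 / 2)) ∧
    (∀ x : ℝ, catoniPhi (-x) = -catoniPhi x) ∧
    (∀ x : ℝ, |catoniPhi x| ≤ 2 * Real.sqrt 2 / 3) := by
  refine ⟨fun x => ⟨?_, ?_⟩, phi_odd, phi_abs⟩
  · have h := phi_upper (-x)
    rw [phi_odd] at h
    have he : 1 + -x + (-x)^2/2 = 1 - x + x^2/2 := by ring
    rw [he] at h
    linarith
  · exact phi_upper x
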